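/- One-step fourth-moment contraction of the synchronous coupling (appendix lemma): Assume (A1), (A2) and (A3(4)). Then for any γ ∈ (0, 2/(11L)] and any θ_k, θ'_k ∈ ℝ^d, with ξ ∼ P_ξ, E_ξ[‖(θ_k − γ∇F(θ_k,ξ)) − (θ'_k − γ∇F(θ'_k,ξ))‖⁴] ≤ (1 − γμ)²·‖θ_k − θ'_k‖⁴. -/

import Mathlib

open MeasureTheory ProbabilityTheory Real
open scoped ENNReal

noncomputable section

local notation "⟪" x ", " y "⟫" => @inner ℝ _ _ x y

/-- Euclidean space `ℝ^d`. -/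
abbrev Vec (d : ℕ) := EuclideanSpace ℝ (Fin d)

/-- Data of a stochastic strongly convex minimization problem:
objective `f` with gradient `grad`, stochastic gradient oracle `sgrad` with noise
distribution `Pξ`, minimizer `θs`, strong convexity constant `μ` and smoothness
constants `L₁, L₂, L₃, L₄`. -/
structure SGD (d : ℕ) (Z : Type*) [MeasurableSpace Z] where
  Pξ : MeasureTheory.Measure Z
  probPξ : MeasureTheory.IsProbabilityMeasure Pξ
  f : Vec d → ℝ
  grad : Vec d → Vec d
  sgrad : Vec d → Z → Vec d
  θs : Vec d
  μ : ℝ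
  L₁ : ℝ
  L₂ : ℝ
  L₃ : ℝ
  L₄ : ℝ

namespace SGD

variable {d : ℕ} {Z : Type*} [MeasurableSpace Z] (S : SGD d Z)

/-- `L = max (L₁, L₂, L₃, L₄)`. -/
def L : ℝ := max (max S.L₁ S.L₂) (max S.L₃ S.L₄)

/-- (A1): `f` is `μ`-strongly convex (with `μ > 0`), differentiable with gradient `grad`,
and `θs` is its (unique) minimizer. -/
def A1 : Prop :=
  0 < S.μ ∧
  (∀ θ, HasGradientAt S.f (S.grad θ) θ) ∧
  (∀ θ θ' : Vec d,
    S.μ / 2 * ‖θ - θ'‖ ^ 2 ≤ S.f θ - S.f θ' - ⟪S.grad θ', θ - θ'⟫) ∧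
  (∀ θ, S.f S.θs ≤ S.f θ)

/-- (A2): `f` is four times continuously differentiable, `∇f` is `L₂`-Lipschitz and the
third and fourth derivatives are uniformly bounded by `L₃`, `L₄`. -/
def A2 : Prop :=
  ContDiff ℝ 4 S.f ∧
  (∀ θ θ' : Vec d, ‖S.grad θ - S.grad θ'‖ ≤ S.L₂ * ‖θ - θ'‖) ∧
  (∀ θ, ‖iteratedFDeriv ℝ 3 S.f θ‖ ≤ S.L₃) ∧
  (∀ θ, ‖iteratedFDeriv ℝ 4 S.f θ‖ ≤ S.L₄)

/-- (A3(p)): the stochastic gradient is measurable and unbiased, has `p`-th moment bounded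
by `τ` at `θs`, and satisfies the generalized `L₁`-co-coercivity bounds for `2 ≤ q ≤ p`. -/
def A3 (p : ℕ) (τ : ℝ) : Prop :=
  Measurable (fun q : Vec d × Z => S.sgrad q.1 q.2) ∧
  (∀ θ, ∫ z, S.sgrad θ z ∂S.Pξ = S.grad θ) ∧
  (∫ z, ‖S.sgrad S.θs z‖ ^ p ∂S.Pξ) ^ (1 / (p : ℝ)) ≤ τ ∧
  (∀ q : ℕ, 2 ≤ q → q ≤ p → ∀ θ₁ θ₂ : Vec d,
    ∫ z, ‖S.sgrad θ₁ z - S.sgrad θ₂ z‖ ^ q ∂S.Pξ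
      ≤ S.L₁ ^ (q - 1) * ‖θ₁ - θ₂‖ ^ (q - 2) * ⟪S.grad θ₁ - S.grad θ₂, θ₁ - θ₂⟫)

/-- One step of the SGD Markov kernel with step size `γ`, acting on distributions:
if `θ ∼ ν` and `ξ ∼ Pξ` are independent, this is the law of `θ - γ • ∇F(θ, ξ)`. -/
def step (γ : ℝ) (ν : Measure (Vec d)) : Measure (Vec d) :=
  (ν.prod S.Pξ).map (fun q : Vec d × Z => q.1 - γ • S.sgrad q.1 q.2)

/-- `π` is an invariant probability distribution of the SGD kernel with step size `γ`. -/
def IsStationary (γ : ℝ) (pst : Measure (Vec d)) : Prop :=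
  IsProbabilityMeasure pst ∧ S.step γ pst = pst

/-- Assumption (C(p)) with constants `Dp`, `ap` and stationary distributions `π γ`. -/
def Cassum (p : ℕ) (τ Dp ap : ℝ) (pst : ℝ → Measure (Vec d)) : Prop :=
  2 ≤ Dp ∧ 2 ≤ ap ∧
  ∀ γ : ℝ, 0 < γ → γ ≤ 1 / (S.L * ap) →
    S.IsStationary γ (pst γ) ∧
    (∀ ν : Measure (Vec d), IsProbabilityMeasure ν → ∀ k : ℕ,
      (∫ θ, ‖θ - S.θs‖ ^ p ∂((S.step γ)^[k] ν)) ^ (2 / (p : ℝ))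
        ≤ (1 - γ * S.μ) ^ k * (∫ θ, ‖θ - S.θs‖ ^ p ∂ν) ^ (2 / (p : ℝ))
          + Dp * γ * τ ^ 2 / S.μ) ∧
    (∫ θ, ‖θ - S.θs‖ ^ p ∂(pst γ)) ^ (2 / (p : ℝ)) ≤ Dp * γ * τ ^ 2 / S.μ

/-- `ξ` is an i.i.d. noise sequence with common law `Pξ` on the probability space `(Ω, P)`. -/
def IsNoise {Ω : Type*} [MeasurableSpace Ω] (P : Measure Ω) (ξ : ℕ → Ω → Z) : Prop :=
  IsProbabilityMeasure P ∧
  (∀ k, Measurable (ξ k)) ∧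
  iIndepFun ξ P ∧
  (∀ k, P.map (ξ k) = S.Pξ)

/-- `θ` is the SGD chain with step size `γ` driven by the noise sequence `ξ`,
with initialization `θ 0` independent of the noise. -/
def IsChain {Ω : Type*} [MeasurableSpace Ω] (P : Measure Ω) (ξ : ℕ → Ω → Z)
    (γ : ℝ) (θ : ℕ → Ω → Vec d) : Prop :=
  Measurable (θ 0) ∧
  IndepFun (θ 0) (fun ω k => ξ k ω) P ∧
  ∀ k ω, θ (k + 1) ω = θ k ω - γ • S.sgrad (θ k ω) (ξ (k + 1) ω)

/-- `H* = ∇²f(θ*)`, the Hessian of `f` at the minimizer, as the derivative of the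
gradient map. -/
def Hs : Vec d →L[ℝ] Vec d := fderiv ℝ S.grad S.θs

/-- `Tr Σ_ε* = E_ξ[‖∇F(θ*, ξ)‖²]`, the trace of the noise covariance at the optimum. -/
def trSigma : ℝ := ∫ z, ‖S.sgrad S.θs z‖ ^ 2 ∂S.Pξ

/-- `η(θ) = ∇f(θ) - H*(θ - θ*)`. -/
def eta (θ : Vec d) : Vec d := S.grad θ - S.Hs (θ - S.θs)

/-- `ψ(θ) = (1/2) ∇³f(θ*) (θ - θ*)^{⊗2}`, characterized through inner products. -/
def IsPsi (ψ : Vec d → Vec d) : Prop :=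
  ∀ θ v : Vec d,
    ⟪ψ θ, v⟫ = (1 / 2) * iteratedFDeriv ℝ 3 S.f S.θs ![θ - S.θs, θ - S.θs, v]

/-- The distance-like cost function
`c(θ, θ') = ‖θ-θ'‖ (‖θ-θ*‖ + ‖θ'-θ*‖ + 2√2 τ₂ √γ / √μ)`. -/
def cost (τ₂ γ : ℝ) (θ θ' : Vec d) : ℝ :=
  ‖θ - θ'‖ * (‖θ - S.θs‖ + ‖θ' - S.θs‖ + 2 * Real.sqrt 2 * τ₂ * Real.sqrt γ / Real.sqrt S.μ)

/-- The constant `C₁` from the bias expansion. -/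
def C₁ (τ₂ D₂ : ℝ) : ℝ :=
  (S.L ^ 2 * D₂ / Real.sqrt S.μ + S.L * Real.sqrt D₂ / Real.sqrt S.μ) * τ₂ ^ 2 / S.μ
    + S.L / S.μ

end SGD

/-- The Polyak–Ruppert tail average `θ̄_n = n⁻¹ ∑_{k=n+1}^{2n} θ_k`. -/
def prAvg {Ω : Type*} {d : ℕ} (θ : ℕ → Ω → Vec d) (n : ℕ) (ω : Ω) : Vec d :=
  (n : ℝ)⁻¹ • ∑ k ∈ Finset.Icc (n + 1) (2 * n), θ k ω

/-- Wasserstein semi-metric associated with the cost `c`: the infimum of `∫ c dρ` over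
all couplings `ρ` of `μ` and `ν`. -/
def Wc {α : Type*} [MeasurableSpace α] (c : α → α → ℝ) (μ ν : Measure α) : ℝ≥0∞ :=
  ⨅ ρ ∈ {ρ : Measure (α × α) | ρ.map Prod.fst = μ ∧ ρ.map Prod.snd = ν},
    ∫⁻ q, ENNReal.ofReal (c q.1 q.2) ∂ρ

private lemma pow4_add_le (a b : ℝ) (ha : 0 ≤ a) (hb : 0 ≤ b) :
    (a + b) ^ 4 ≤ 8 * (a ^ 4 + b ^ 4) := by
  nlinarith [sq_nonneg (a - b), sq_nonneg (a + b), sq_nonneg (a ^ 2 - b ^ 2),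
    mul_nonneg ha hb, sq_nonneg (a * b)]

private lemma pow_le_one_add_pow4 {t : ℝ} (ht : 0 ≤ t) {k : ℕ} (hk : k ≤ 4) :
    t ^ k ≤ 1 + t ^ 4 := by
  rcases le_total t 1 with h | h
  · have h1 : t ^ k ≤ 1 := pow_le_one₀ ht h
    have h2 : 0 ≤ t ^ 4 := by positivity
    linarith
  · have h1 : t ^ k ≤ t ^ 4 := pow_le_pow_right₀ h hk
    linarith

private lemma quad_bound {γ r x n : ℝ} (hγ : 0 < γ) (hn : 0 ≤ n)
    (hxl : -(r * n) ≤ x) (hxu : x ≤ r * n) :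
    (r ^ 2 - 2 * (γ * x) + γ ^ 2 * n ^ 2) ^ 2
      ≤ r ^ 4 + (-(4 * γ * r ^ 2)) * x + (6 * γ ^ 2 * r ^ 2) * n ^ 2
        + (4 * γ ^ 3 * r) * n ^ 3 + γ ^ 4 * n ^ 4 := by
  nlinarith [mul_nonneg (mul_nonneg (sq_nonneg γ) (by linarith : (0:ℝ) ≤ r * n - x))
      (by linarith : (0:ℝ) ≤ r * n + x),
    mul_nonneg (mul_nonneg (pow_nonneg hγ.le 3) (sq_nonneg n))
      (by linarith : (0:ℝ) ≤ r * n + x)]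

private lemma final_bound {γ μ L₁ r A M2 M3 M4 : ℝ} (hγ : 0 < γ) (hμ : 0 < μ)
    (hL1 : 0 ≤ L₁) (ht : γ * L₁ ≤ 2 / 11) (hr : 0 < r) (hA : μ * r ^ 2 ≤ A)
    (hM2 : M2 ≤ L₁ * A) (hM3 : M3 ≤ L₁ ^ 2 * r * A) (hM4 : M4 ≤ L₁ ^ 3 * r ^ 2 * A) :
    r ^ 4 + (-(4 * γ * r ^ 2)) * A + (6 * γ ^ 2 * r ^ 2) * M2
      + (4 * γ ^ 3 * r) * M3 + γ ^ 4 * M4 ≤ (1 - γ * μ) ^ 2 * r ^ 4 := by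
  have hApos : 0 < A := lt_of_lt_of_le (by positivity) hA
  have e1 : (6 * γ ^ 2 * r ^ 2) * M2 ≤ (6 * γ ^ 2 * r ^ 2) * (L₁ * A) :=
    mul_le_mul_of_nonneg_left hM2 (by positivity)
  have e2 : (4 * γ ^ 3 * r) * M3 ≤ (4 * γ ^ 3 * r) * (L₁ ^ 2 * r * A) :=
    mul_le_mul_of_nonneg_left hM3 (by positivity)
  have e3 : γ ^ 4 * M4 ≤ γ ^ 4 * (L₁ ^ 3 * r ^ 2 * A) :=
    mul_le_mul_of_nonneg_left hM4 (by positivity)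
  have hc : -4 + 6 * (γ * L₁) + 4 * (γ * L₁) ^ 2 + (γ * L₁) ^ 3 ≤ -2 := by
    nlinarith [mul_nonneg hγ.le hL1, sq_nonneg (γ * L₁)]
  have e4 : γ * (r ^ 2 * A) * (-4 + 6 * (γ * L₁) + 4 * (γ * L₁) ^ 2 + (γ * L₁) ^ 3)
      ≤ γ * (r ^ 2 * A) * (-2) :=
    mul_le_mul_of_nonneg_left hc (by positivity)
  have e5 : 2 * γ * r ^ 2 * (μ * r ^ 2) ≤ 2 * γ * r ^ 2 * A :=
    mul_le_mul_of_nonneg_left hA (by positivity)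
  nlinarith [sq_nonneg (γ * μ * r ^ 2), e1, e2, e3, e4, e5]

/-- appendix lemma: one-step fourth-moment contraction of the
synchronous coupling. -/
theorem statement16 {d : ℕ} {Z : Type*} [MeasurableSpace Z] (S : SGD d Z)
    (τ₄ : ℝ) (hA1 : S.A1) (hA2 : S.A2) (hA3 : S.A3 4 τ₄)
    (γ : ℝ) (hγ : 0 < γ) (hγle : γ ≤ 2 / (11 * S.L))
    (θ θ' : Vec d) :
    ∫ z, ‖(θ - γ • S.sgrad θ z) - (θ' - γ • S.sgrad θ' z)‖ ^ 4 ∂S.Pξ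
      ≤ (1 - γ * S.μ) ^ 2 * ‖θ - θ'‖ ^ 4 := by
  obtain ⟨hμ, hgrad, hsc, hmin⟩ := hA1
  obtain ⟨hmeas, hunb, hmom, hq⟩ := hA3
  haveI : IsProbabilityMeasure S.Pξ := S.probPξ
  rcases eq_or_ne θ θ' with rfl | hne
  · simp
  set G : Z → Vec d := fun z => S.sgrad θ z - S.sgrad θ' z with hGdef
  have hmθ : Measurable fun z => S.sgrad θ z := hmeas.comp measurable_prodMk_left
  have hmθ' : Measurable fun z => S.sgrad θ' z := hmeas.comp measurable_prodMk_left
  have hGm : Measurable G := hmθ.sub hmθ'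
  clear_value G
  have hrw : ∀ z : Z, (θ - γ • S.sgrad θ z) - (θ' - γ • S.sgrad θ' z)
      = (θ - θ') - γ • G z := by
    intro z; simp only [hGdef, smul_sub]; abel
  simp only [hrw]
  set r := ‖θ - θ'‖ with hrdef
  have hr : 0 < r := by rw [hrdef, norm_pos_iff, sub_ne_zero]; exact hne
  clear_value r
  by_cases hint : Integrable (fun z => ‖(θ - θ') - γ • G z‖ ^ 4) S.Pξ
  swap
  · rw [integral_undef hint]; positivity
  have hL1le : S.L₁ ≤ S.L := le_trans (le_max_left _ _) (le_max_left _ _)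
  have hL : 0 < S.L := by
    by_contra h
    push_neg at h
    have h2 : 2 / (11 * S.L) ≤ 0 :=
      div_nonpos_of_nonneg_of_nonpos (by norm_num) (by linarith)
    linarith
  have ht2 : γ * S.L₁ ≤ 2 / 11 := by
    rw [le_div_iff₀ (by positivity)] at hγle
    nlinarith [mul_le_mul_of_nonneg_left hL1le hγ.le]
  set A := ⟪S.grad θ - S.grad θ', θ - θ'⟫ with hAdef
  have hA : S.μ * r ^ 2 ≤ A := by
    have h1 := hsc θ θ'
    rw [← hrdef] at h1
    have h2 := hsc θ' θ
    have e3 : ‖θ' - θ‖ = r := by rw [hrdef, norm_sub_rev]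
    rw [e3] at h2
    have e1 : A = ⟪S.grad θ, θ - θ'⟫ - ⟪S.grad θ', θ - θ'⟫ := by
      rw [hAdef, inner_sub_left]
    have e2 : ⟪S.grad θ, θ' - θ⟫ = - ⟪S.grad θ, θ - θ'⟫ := by
      rw [show θ' - θ = -(θ - θ') by abel, inner_neg_right]
    rw [e2] at h2
    rw [e1]
    linarith
  have hApos : 0 < A := lt_of_lt_of_le (by positivity) hA
  clear_value A
  have hM2 : ∫ z, ‖G z‖ ^ 2 ∂S.Pξ ≤ S.L₁ * A := by
    have h := hq 2 le_rfl (by norm_num) θ θ'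
    simpa [hGdef, hAdef] using h
  have hM3 : ∫ z, ‖G z‖ ^ 3 ∂S.Pξ ≤ S.L₁ ^ 2 * r * A := by
    have h := hq 3 (by norm_num) (by norm_num) θ θ'
    simpa [hGdef, hAdef, hrdef] using h
  have hM4 : ∫ z, ‖G z‖ ^ 4 ∂S.Pξ ≤ S.L₁ ^ 3 * r ^ 2 * A := by
    have h := hq 4 (by norm_num) (by norm_num) θ θ'
    simpa [hGdef, hAdef, hrdef] using h
  have hL1nn : 0 ≤ S.L₁ := by
    have h0 : 0 ≤ ∫ z, ‖G z‖ ^ 2 ∂S.Pξ := integral_nonneg fun z => by positivity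
    nlinarith
  -- integrability ladder
  have hG4 : Integrable (fun z => ‖G z‖ ^ 4) S.Pξ := by
    refine Integrable.mono'
      ((hint.add (integrable_const (r ^ 4))).const_mul (8 / γ ^ 4))
      ((hGm.norm.pow_const 4).aestronglyMeasurable) ?_
    filter_upwards with z
    rw [Real.norm_eq_abs, abs_of_nonneg (by positivity)]
    have htr : γ * ‖G z‖ ≤ ‖(θ - θ') - γ • G z‖ + r := by
      have h1 : ‖(θ - θ') - ((θ - θ') - γ • G z)‖ ≤ ‖θ - θ'‖ + ‖(θ - θ') - γ • G z‖ :=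
        norm_sub_le _ _
      have h2 : (θ - θ') - ((θ - θ') - γ • G z) = γ • G z := by abel
      rw [h2, norm_smul, Real.norm_eq_abs, abs_of_pos hγ] at h1
      rw [hrdef]; linarith
    have h3 : (γ * ‖G z‖) ^ 4 ≤ (‖(θ - θ') - γ • G z‖ + r) ^ 4 :=
      pow_le_pow_left₀ (by positivity) htr 4
    have h4 : (‖(θ - θ') - γ • G z‖ + r) ^ 4
        ≤ 8 * (‖(θ - θ') - γ • G z‖ ^ 4 + r ^ 4) :=
      pow4_add_le _ _ (norm_nonneg _) hr.le
    rw [div_mul_eq_mul_div, le_div_iff₀ (by positivity : (0:ℝ) < γ ^ 4)]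
    have he : ‖G z‖ ^ 4 * γ ^ 4 = (γ * ‖G z‖) ^ 4 := by ring
    rw [he]
    exact h3.trans h4
  have hG3 : Integrable (fun z => ‖G z‖ ^ 3) S.Pξ := by
    refine Integrable.mono' ((integrable_const (1:ℝ)).add hG4)
      ((hGm.norm.pow_const 3).aestronglyMeasurable) ?_
    filter_upwards with z
    rw [Real.norm_eq_abs, abs_of_nonneg (by positivity)]
    exact pow_le_one_add_pow4 (norm_nonneg _) (by norm_num)
  have hG2 : Integrable (fun z => ‖G z‖ ^ 2) S.Pξ := by
    refine Integrable.mono' ((integrable_const (1:ℝ)).add hG4)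
      ((hGm.norm.pow_const 2).aestronglyMeasurable) ?_
    filter_upwards with z
    rw [Real.norm_eq_abs, abs_of_nonneg (by positivity)]
    exact pow_le_one_add_pow4 (norm_nonneg _) (by norm_num)
  have hG1 : Integrable (fun z => ‖G z‖) S.Pξ := by
    refine Integrable.mono' ((integrable_const (1:ℝ)).add hG4)
      (hGm.norm.aestronglyMeasurable) ?_
    filter_upwards with z
    rw [Real.norm_eq_abs, abs_of_nonneg (norm_nonneg _)]
    simpa using pow_le_one_add_pow4 (norm_nonneg (G z)) (show 1 ≤ 4 by norm_num)
  have hGi : Integrable G S.Pξ :=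
    (integrable_norm_iff hGm.aestronglyMeasurable).1 hG1
  have hxi : Integrable (fun z => ⟪(θ - θ'), G z⟫) S.Pξ := hGi.const_inner _
  -- unbiasedness: ∫ ⟪θ-θ', G⟫ = A
  have hB : ∫ z, ⟪(θ - θ'), G z⟫ ∂S.Pξ = A := by
    have key : ∫ z, G z ∂S.Pξ = S.grad θ - S.grad θ' := by
      by_cases hθi : Integrable (fun z => S.sgrad θ z) S.Pξ
      · have hθ'i : Integrable (fun z => S.sgrad θ' z) S.Pξ := by
          have he : (fun z => S.sgrad θ' z) = fun z => S.sgrad θ z - G z := by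
            funext z; simp [hGdef]
          rw [he]; exact hθi.sub hGi
        have : ∫ z, G z ∂S.Pξ
            = (∫ z, S.sgrad θ z ∂S.Pξ) - ∫ z, S.sgrad θ' z ∂S.Pξ := by
          simp only [hGdef]; exact integral_sub hθi hθ'i
        rw [this, hunb θ, hunb θ']
      · exfalso
        have hθ'i : ¬ Integrable (fun z => S.sgrad θ' z) S.Pξ := by
          intro h
          apply hθi
          have he : (fun z => S.sgrad θ z) = fun z => G z + S.sgrad θ' z := by
            funext z; simp [hGdef]
          rw [he]; exact hGi.add h
        have e1 : S.grad θ = 0 := by rw [← hunb θ, integral_undef hθi]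
        have e2 : S.grad θ' = 0 := by rw [← hunb θ', integral_undef hθ'i]
        rw [hAdef, e1, e2] at hApos
        simp at hApos
    rw [integral_inner hGi, key, real_inner_comm]
    exact hAdef.symm
  -- pointwise bound by Q
  set Q : Z → ℝ := fun z => r ^ 4 + (-(4 * γ * r ^ 2)) * ⟪(θ - θ'), G z⟫
      + (6 * γ ^ 2 * r ^ 2) * ‖G z‖ ^ 2 + (4 * γ ^ 3 * r) * ‖G z‖ ^ 3
      + γ ^ 4 * ‖G z‖ ^ 4 with hQdef
  have hpt : ∀ z, ‖(θ - θ') - γ • G z‖ ^ 4 ≤ Q z := by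
    intro z
    have hxb : |⟪(θ - θ'), G z⟫| ≤ r * ‖G z‖ := by
      rw [hrdef]; exact abs_real_inner_le_norm _ _
    obtain ⟨hxl, hxu⟩ := abs_le.1 hxb
    have hn : (0:ℝ) ≤ ‖G z‖ := norm_nonneg _
    have hnorm : ‖(θ - θ') - γ • G z‖ ^ 2
        = r ^ 2 - 2 * (γ * ⟪(θ - θ'), G z⟫) + γ ^ 2 * ‖G z‖ ^ 2 := by
      rw [norm_sub_sq_real, real_inner_smul_right, norm_smul, Real.norm_eq_abs,
        abs_of_pos hγ, hrdef]
      ring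
    have h4 : ‖(θ - θ') - γ • G z‖ ^ 4
        = (r ^ 2 - 2 * (γ * ⟪(θ - θ'), G z⟫) + γ ^ 2 * ‖G z‖ ^ 2) ^ 2 := by
      rw [show (4:ℕ) = 2 * 2 from rfl, pow_mul, hnorm]
    rw [h4, hQdef]
    exact quad_bound hγ hn hxl hxu
  have i0 : Integrable (fun z => (-(4 * γ * r ^ 2)) * ⟪(θ - θ'), G z⟫) S.Pξ :=
    hxi.const_mul _
  have i2 : Integrable (fun z => (6 * γ ^ 2 * r ^ 2) * ‖G z‖ ^ 2) S.Pξ :=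
    hG2.const_mul _
  have i3 : Integrable (fun z => (4 * γ ^ 3 * r) * ‖G z‖ ^ 3) S.Pξ :=
    hG3.const_mul _
  have i4 : Integrable (fun z => γ ^ 4 * ‖G z‖ ^ 4) S.Pξ :=
    hG4.const_mul _
  have hQi : Integrable Q S.Pξ := by
    rw [hQdef]
    exact ((((integrable_const _).add i0).add i2).add i3).add i4
  have hQval : ∫ z, Q z ∂S.Pξ
      = r ^ 4 + (-(4 * γ * r ^ 2)) * A
        + (6 * γ ^ 2 * r ^ 2) * (∫ z, ‖G z‖ ^ 2 ∂S.Pξ)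
        + (4 * γ ^ 3 * r) * (∫ z, ‖G z‖ ^ 3 ∂S.Pξ)
        + γ ^ 4 * (∫ z, ‖G z‖ ^ 4 ∂S.Pξ) := by
    have h0 : Integrable (fun _ : Z => r ^ 4) S.Pξ := integrable_const _
    have h01 : Integrable (fun z => r ^ 4
        + (-(4 * γ * r ^ 2)) * ⟪(θ - θ'), G z⟫) S.Pξ := h0.add i0
    have h012 : Integrable (fun z => r ^ 4
        + (-(4 * γ * r ^ 2)) * ⟪(θ - θ'), G z⟫
        + (6 * γ ^ 2 * r ^ 2) * ‖G z‖ ^ 2) S.Pξ := h01.add i2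
    have h0123 : Integrable (fun z => r ^ 4
        + (-(4 * γ * r ^ 2)) * ⟪(θ - θ'), G z⟫
        + (6 * γ ^ 2 * r ^ 2) * ‖G z‖ ^ 2
        + (4 * γ ^ 3 * r) * ‖G z‖ ^ 3) S.Pξ := h012.add i3
    rw [hQdef]
    rw [integral_add h0123 i4, integral_add h012 i3, integral_add h01 i2,
      integral_add h0 i0,
      integral_const, integral_const_mul, integral_const_mul, integral_const_mul,
      integral_const_mul, hB]
    simp [measure_univ]
  calc ∫ z, ‖(θ - θ') - γ • G z‖ ^ 4 ∂S.Pξ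
      ≤ ∫ z, Q z ∂S.Pξ := integral_mono hint hQi hpt
    _ ≤ (1 - γ * S.μ) ^ 2 * r ^ 4 := by
        rw [hQval]
        exact final_bound hγ hμ hL1nn ht2 hr hA hM2 hM3 hM4
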